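/- arXiv:1104.4018 — 10 statements merged into one kernel-verified Lean document; each statement's English description precedes it below -/
import Mathlib

section
/- Let p be an odd prime, let h be an irreducible polynomial in (ZMod p)[X] with natDegree n ≥ 1 and nonzero constant coefficient, let K be the quotient field (ZMod p)[X] ⧸ span{h}, and let t̄ ∈ K be the residue class of X. Assume h is not associated to X − 1. Then for every natural number m, the m-th iterated Alexander quandle operation satisfies a *^m b = a for all a, b ∈ K if and only if h divides the polynomial ∑_{j=0}^{m−1} X^j in (ZMod p)[X]. -/
open Polynomial

/-- The iterated Alexander quandle operation: `alexIter t 0 a b = a` and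
`alexIter t (m+1) a b = (alexIter t m a b) * b` where `x * y = t*x + (1-t)*y`. -/
def alexIter {K : Type*} [CommRing K] (t : K) : ℕ → K → K → K
  | 0, a, _ => a
  | m + 1, a, b => t * alexIter t m a b + (1 - t) * b

lemma alexIter_eq {K : Type*} [CommRing K] (t : K) (m : ℕ) (a b : K) :
    alexIter t m a b = t ^ m * a + (1 - t ^ m) * b := by
  induction m with
  | zero => simp [alexIter]
  | succ m ih => rw [alexIter, ih]; ring

/-- With `K = (ZMod p)[X] ⧸ span {h}` and `t̄` the class of `X`, assuming
`h` is not associated to `X - 1`, the `m`-th iterated Alexander quandle operation satisfies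
`a *^m b = a` for all `a, b ∈ K` iff `h` divides `∑_{j=0}^{m-1} X^j` in `(ZMod p)[X]`. -/
theorem alexander_quandle_iterate_trivial_iff (p : ℕ) (hp : p.Prime) (hodd : Odd p)
    (h : Polynomial (ZMod p)) (hirr : Irreducible h)
    (hdeg : 1 ≤ h.natDegree) (hc0 : h.coeff 0 ≠ 0)
    (hne : ¬ Associated h (X - 1)) (m : ℕ) :
    (∀ a b : Polynomial (ZMod p) ⧸ Ideal.span {h},
        alexIter (Ideal.Quotient.mk (Ideal.span {h}) X) m a b = a) ↔
      h ∣ ∑ j ∈ Finset.range m, X ^ j := by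
  haveI : Fact p.Prime := ⟨hp⟩
  set t : Polynomial (ZMod p) ⧸ Ideal.span {h} := Ideal.Quotient.mk (Ideal.span {h}) X
  have key : h ∣ X ^ m - 1 ↔ h ∣ ∑ j ∈ Finset.range m, X ^ j := by
    rw [← geom_sum_mul (X : Polynomial (ZMod p)) m]
    constructor
    · intro hd
      rcases hirr.prime.dvd_mul.mp hd with h1 | h2
      · exact h1
      · exact absurd (hirr.associated_of_dvd (by simpa using irreducible_X_sub_C (1 : ZMod p)) h2) hne
    · exact fun hd => hd.mul_right _
  have ht : (∀ a b : Polynomial (ZMod p) ⧸ Ideal.span {h},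
      alexIter t m a b = a) ↔ t ^ m = 1 := by
    constructor
    · intro H
      have := H 0 1
      rw [alexIter_eq] at this
      simp at this
      linear_combination -this
    · intro ht a b
      rw [alexIter_eq, ht]
      ring
  rw [ht, ← key]
  have : t ^ m = Ideal.Quotient.mk (Ideal.span {h}) (X ^ m) := by simp [t]
  rw [this, ← sub_eq_zero, ← map_one (Ideal.Quotient.mk (Ideal.span {h})), ← map_sub,
    Ideal.Quotient.eq_zero_iff_mem, Ideal.mem_span_singleton]
end

section
/- Let p be an odd prime, let h be an irreducible polynomial in (ZMod p)[X] with natDegree n ≥ 1 and nonzero constant coefficient, let K be the quotient field (ZMod p)[X] ⧸ span{h}, and let t̄ ∈ K be the residue class of X. If h is not associated to X − 1, then the multiplicative order of t̄ in K satisfies orderOf t̄ ≥ n + 1. -/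
open Polynomial

/-- Let `p` be an odd prime, `h` irreducible in `(ZMod p)[X]` with
`natDegree n ≥ 1` and nonzero constant coefficient, `K = (ZMod p)[X] ⧸ span {h}` and `t̄`
the class of `X`. If `h` is not associated to `X - 1`, then `orderOf t̄ ≥ n + 1`. -/
theorem alexander_quandle_type_lower_bound (p : ℕ) (hp : p.Prime) (hodd : Odd p)
    (h : Polynomial (ZMod p)) (hirr : Irreducible h)
    (hdeg : 1 ≤ h.natDegree) (hc0 : h.coeff 0 ≠ 0)
    (hne : ¬ Associated h (X - 1)) :
    h.natDegree + 1 ≤ orderOf (Ideal.Quotient.mk (Ideal.span {h}) X) := by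
  haveI : Fact p.Prime := ⟨hp⟩
  haveI : Fact (Irreducible h) := ⟨hirr⟩
  have hh0 : h ≠ 0 := hirr.ne_zero
  have hid : orderOf (Ideal.Quotient.mk (Ideal.span {h}) X) = orderOf (AdjoinRoot.root h) := rfl
  rw [hid]
  haveI : Finite (AdjoinRoot h) := by
    haveI : Module.Finite (ZMod p) (AdjoinRoot h) :=
      Module.Finite.of_basis (AdjoinRoot.powerBasis hh0).basis
    exact Module.finite_of_finite (ZMod p)
  set t := AdjoinRoot.root h with ht
  have ht0 : t ≠ 0 := by
    intro h0
    have hdvd : h ∣ X := by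
      rwa [← AdjoinRoot.mk_eq_zero, AdjoinRoot.mk_X, ← ht]
    have hassoc : Associated h X := hirr.associated_of_dvd (irreducible_X) hdvd
    have : (X : Polynomial (ZMod p)) ∣ h := hassoc.symm.dvd
    rw [Polynomial.X_dvd_iff] at this
    exact hc0 this
  obtain ⟨u, hu⟩ := isUnit_iff_ne_zero.mpr ht0
  have hpos : 0 < orderOf t := by
    rw [← hu, orderOf_units]
    exact orderOf_pos u
  set e := orderOf t with he
  have hdvd : h ∣ X ^ e - 1 := by
    rw [← AdjoinRoot.mk_eq_zero]
    rw [map_sub, map_pow, AdjoinRoot.mk_X, map_one, ← ht, pow_orderOf_eq_one, sub_self]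
  have hXe : (X ^ e - 1 : Polynomial (ZMod p)) ≠ 0 := by
    have : natDegree (X ^ e - 1 : Polynomial (ZMod p)) = e := by
      simpa using natDegree_X_pow_sub_C (n := e) (r := (1 : ZMod p))
    intro h0
    rw [h0, natDegree_zero] at this
    omega
  have hdegXe : natDegree (X ^ e - 1 : Polynomial (ZMod p)) = e := by
    simpa using natDegree_X_pow_sub_C (n := e) (r := (1 : ZMod p))
  have hle : h.natDegree ≤ e := by
    have := Polynomial.natDegree_le_of_dvd hdvd hXe
    omega
  rcases lt_or_eq_of_le hle with hlt | heq
  · omega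
  -- case e = natDegree h
  exfalso
  rw [← heq] at hdvd
  have hroot : (X - 1 : Polynomial (ZMod p)) ∣ X ^ h.natDegree - 1 := by
    have : (X - C 1 : Polynomial (ZMod p)) ∣ X ^ h.natDegree - 1 := by
      rw [dvd_iff_isRoot]
      simp [IsRoot]
    simpa using this
  obtain ⟨g, hg⟩ := hroot
  have hdegX1 : natDegree (X - 1 : Polynomial (ZMod p)) = 1 := by
    rw [show (X - 1 : Polynomial (ZMod p)) = X - C 1 by simp]
    exact natDegree_X_sub_C 1
  have hX1ne : (X - 1 : Polynomial (ZMod p)) ≠ 0 := by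
    intro h0
    rw [h0, natDegree_zero] at hdegX1
    omega
  have hgne : g ≠ 0 := by
    intro h0
    rw [h0, mul_zero] at hg
    rw [← heq] at hXe
    exact hXe hg
  have hdegg : natDegree g = h.natDegree - 1 := by
    have := natDegree_mul hX1ne hgne
    rw [← hg] at this
    rw [← heq] at hdegXe
    omega
  have hprime : Prime h := hirr.prime
  rw [hg] at hdvd
  rcases hprime.dvd_or_dvd hdvd with h1 | h1
  · have hX1irr : Irreducible (X - 1 : Polynomial (ZMod p)) := by
      rw [show (X - 1 : Polynomial (ZMod p)) = X - C 1 by simp]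
      exact irreducible_X_sub_C 1
    exact hne (hirr.associated_of_dvd hX1irr h1)
  · have := Polynomial.natDegree_le_of_dvd h1 hgne
    omega
end

section
/- Let p be an odd prime, let h be an irreducible polynomial in (ZMod p)[X] with natDegree n ≥ 1 and nonzero constant coefficient, let K be the quotient field (ZMod p)[X] ⧸ span{h}, and let t̄ ∈ K be the residue class of X. Assume h is not associated to X − 1. Then the multiplicative order of t̄ in K equals n + 1 if and only if h is associated to the polynomial ∑_{j=0}^{n} X^j in (ZMod p)[X]; moreover, if this holds then ∑_{j=0}^{n} X^j is irreducible in (ZMod p)[X]. -/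
open Polynomial

/-- Over a field, if `a ∣ b`, `b ≠ 0` and `natDegree b ≤ natDegree a`,
then `a` and `b` are associated. -/
lemma assoc_of_dvd_of_natDegree_le {F : Type*} [Field F] {a b : F[X]}
    (hab : a ∣ b) (hb : b ≠ 0) (hd : b.natDegree ≤ a.natDegree) : Associated a b := by
  obtain ⟨c, rfl⟩ := hab
  have ha : a ≠ 0 := fun h => hb (by simp [h])
  have hc : c ≠ 0 := fun h => hb (by simp [h])
  have hdeg : (a * c).natDegree = a.natDegree + c.natDegree := natDegree_mul ha hc
  have hc0 : c.natDegree = 0 := by omega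
  have : IsUnit c := by
    rw [Polynomial.eq_C_of_natDegree_eq_zero hc0]
    exact isUnit_C.mpr (isUnit_iff_ne_zero.mpr (fun h => hc (by
      rw [Polynomial.eq_C_of_natDegree_eq_zero hc0, h, map_zero])))
  exact ⟨this.unit, by rw [IsUnit.unit_spec]⟩

/-- With `p` an odd prime, `h` irreducible in `(ZMod p)[X]` with
`natDegree n ≥ 1` and nonzero constant coefficient, `K = (ZMod p)[X] ⧸ span {h}`, `t̄` the
class of `X`, and `h` not associated to `X - 1`: the multiplicative order of `t̄` equals
`n + 1` iff `h` is associated to `∑_{j=0}^{n} X^j`; moreover in that case `∑_{j=0}^{n} X^j`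
is irreducible in `(ZMod p)[X]`. -/
theorem alexander_quandle_type_eq_succ_iff (p : ℕ) (hp : p.Prime) (hodd : Odd p)
    (h : Polynomial (ZMod p)) (hirr : Irreducible h)
    (hdeg : 1 ≤ h.natDegree) (hc0 : h.coeff 0 ≠ 0)
    (hne : ¬ Associated h (X - 1)) :
    (orderOf (Ideal.Quotient.mk (Ideal.span {h}) X) = h.natDegree + 1 ↔
        Associated h (∑ j ∈ Finset.range (h.natDegree + 1), X ^ j)) ∧
    (orderOf (Ideal.Quotient.mk (Ideal.span {h}) X) = h.natDegree + 1 →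
        Irreducible (∑ j ∈ Finset.range (h.natDegree + 1), (X : Polynomial (ZMod p)) ^ j)) := by
  haveI := Fact.mk hp
  set n := h.natDegree with hn
  set Φ : Polynomial (ZMod p) := ∑ j ∈ Finset.range (n + 1), X ^ j with hΦ
  have hh0 : h ≠ 0 := hirr.ne_zero
  -- key identity : Φ * (X - 1) = X^(n+1) - 1
  have hgeom : Φ * (X - 1) = X ^ (n + 1) - 1 := geom_sum_mul X (n + 1)
  have hΦ0 : Φ ≠ 0 := by
    intro h0
    have : (X : Polynomial (ZMod p)) ^ (n + 1) - 1 = 0 := by rw [← hgeom, h0, zero_mul]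
    have hne0 : (X : Polynomial (ZMod p)) ^ (n + 1) - C 1 ≠ 0 :=
      X_pow_sub_C_ne_zero (Nat.succ_pos n) 1
    rw [map_one] at hne0; exact hne0 this
  have hΦdeg : Φ.natDegree = n := by
    have hX1 : (X - 1 : Polynomial (ZMod p)) ≠ 0 := by
      have := X_sub_C_ne_zero (1 : ZMod p); rwa [map_one] at this
    have h1 : (Φ * (X - 1)).natDegree = Φ.natDegree + (X - 1 : Polynomial (ZMod p)).natDegree :=
      natDegree_mul hΦ0 hX1
    have h2 : ((X : Polynomial (ZMod p)) ^ (n + 1) - 1).natDegree = n + 1 := by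
      have := natDegree_X_pow_sub_C (n := n + 1) (r := (1 : ZMod p))
      rwa [map_one] at this
    have h3 : (X - 1 : Polynomial (ZMod p)).natDegree = 1 := by
      have := natDegree_X_sub_C (1 : ZMod p); rwa [map_one] at this
    rw [hgeom, h2, h3] at h1; omega
  -- characterization of t̄^m = 1
  have hpow : ∀ m : ℕ, (Ideal.Quotient.mk (Ideal.span {h}) X) ^ m = 1 ↔ h ∣ X ^ m - 1 := by
    intro m
    rw [← map_pow, ← map_one (Ideal.Quotient.mk (Ideal.span {h})),
      Ideal.Quotient.mk_eq_mk_iff_sub_mem, Ideal.mem_span_singleton]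
  have hprime : Prime h := hirr.prime
  constructor
  · constructor
    · -- forward
      intro hord
      have h1 : (Ideal.Quotient.mk (Ideal.span {h}) X) ^ (n + 1) = 1 := by
        rw [← hord]; exact pow_orderOf_eq_one _
      have hdvd : h ∣ X ^ (n + 1) - 1 := (hpow _).mp h1
      rw [← hgeom] at hdvd
      rcases hprime.dvd_mul.mp hdvd with hd | hd
      · -- h ∣ Φ, same degree
        exact assoc_of_dvd_of_natDegree_le hd hΦ0 (by omega)
      · -- h ∣ X - 1 : contradiction with hne
        have hX1 : (X - 1 : Polynomial (ZMod p)) ≠ 0 := by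
          have := X_sub_C_ne_zero (1 : ZMod p); rwa [map_one] at this
        have h3 : (X - 1 : Polynomial (ZMod p)).natDegree = 1 := by
          have := natDegree_X_sub_C (1 : ZMod p); rwa [map_one] at this
        exact absurd (assoc_of_dvd_of_natDegree_le hd hX1 (by omega)) hne
    · -- backward
      intro hassoc
      have hdvdΦ : h ∣ Φ := hassoc.dvd
      have h1 : (Ideal.Quotient.mk (Ideal.span {h}) X) ^ (n + 1) = 1 := by
        rw [hpow, ← hgeom]; exact hdvdΦ.mul_right _
      have hd : orderOf (Ideal.Quotient.mk (Ideal.span {h}) X) ∣ n + 1 :=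
        orderOf_dvd_of_pow_eq_one h1
      set d := orderOf (Ideal.Quotient.mk (Ideal.span {h}) X) with hdd
      have hd0 : d ≠ 0 := fun h0 => by simp [h0] at hd
      by_contra hcon
      have hdlt : d < n + 1 := lt_of_le_of_ne (Nat.le_of_dvd (Nat.succ_pos n) hd) hcon
      have hdvd2 : h ∣ X ^ d - 1 := (hpow d).mp (pow_orderOf_eq_one _)
      have hXd0 : (X : Polynomial (ZMod p)) ^ d - 1 ≠ 0 := by
        have := X_pow_sub_C_ne_zero (Nat.pos_of_ne_zero hd0) (1 : ZMod p)
        rwa [map_one] at this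
      have hXddeg : ((X : Polynomial (ZMod p)) ^ d - 1).natDegree = d := by
        have := natDegree_X_pow_sub_C (n := d) (r := (1 : ZMod p))
        rwa [map_one] at this
      have hled : n ≤ d := by
        have := natDegree_le_of_dvd hdvd2 hXd0; rw [hXddeg] at this; omega
      -- then d = n, n ∣ n+1 ⇒ n = 1, d = 1
      have hdn : d = n := by omega
      have hn1 : n = 1 := by
        have : n ∣ n + 1 := hdn ▸ hd
        have : n ∣ 1 := (Nat.dvd_add_right dvd_rfl).mp this
        exact Nat.dvd_one.mp this
      have hd1 : d = 1 := by omega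
      have : h ∣ X - 1 := by
        have := hdvd2
        rw [hd1, pow_one] at this
        exact this
      have hX1 : (X - 1 : Polynomial (ZMod p)) ≠ 0 := by
        have := X_sub_C_ne_zero (1 : ZMod p); rwa [map_one] at this
      have h3 : (X - 1 : Polynomial (ZMod p)).natDegree = 1 := by
        have := natDegree_X_sub_C (1 : ZMod p); rwa [map_one] at this
      exact hne (assoc_of_dvd_of_natDegree_le this hX1 (by omega))
  · intro hord
    have h1 : (Ideal.Quotient.mk (Ideal.span {h}) X) ^ (n + 1) = 1 := by
      rw [← hord]; exact pow_orderOf_eq_one _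
    have hdvd : h ∣ X ^ (n + 1) - 1 := (hpow _).mp h1
    rw [← hgeom] at hdvd
    rcases hprime.dvd_mul.mp hdvd with hd | hd
    · exact (assoc_of_dvd_of_natDegree_le hd hΦ0 (by omega)).irreducible hirr
    · have hX1 : (X - 1 : Polynomial (ZMod p)) ≠ 0 := by
        have := X_sub_C_ne_zero (1 : ZMod p); rwa [map_one] at this
      have h3 : (X - 1 : Polynomial (ZMod p)).natDegree = 1 := by
        have := natDegree_X_sub_C (1 : ZMod p); rwa [map_one] at this
      exact absurd (assoc_of_dvd_of_natDegree_le hd hX1 (by omega)) hne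
end

section
/- Let n ≥ 1 be a natural number and let p be a prime with p > n(n−1) + 2. Then there exists a ∈ ZMod p with a ≠ 0 and a ≠ −1 such that for every i with 1 ≤ i ≤ n one has ∑_{j=0}^{i−1} (−a)^j ≠ 0 in ZMod p. -/
open Polynomial

/-- Let `n ≥ 1` and let `p` be a prime with `p > n(n-1) + 2`. Then there
exists `a ∈ ZMod p` with `a ≠ 0`, `a ≠ -1`, such that `-a` is not a root of any of the
polynomials `∑_{j=0}^{i-1} X^j` for `1 ≤ i ≤ n`. -/
theorem exists_nonroot_of_large_prime (n : ℕ) (hn : 1 ≤ n) (p : ℕ) (hp : p.Prime)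
    (hlarge : n * (n - 1) + 2 < p) :
    ∃ a : ZMod p, a ≠ 0 ∧ a ≠ -1 ∧
      ∀ i : ℕ, 1 ≤ i → i ≤ n → ∑ j ∈ Finset.range i, (-a) ^ j ≠ 0 := by
  haveI : Fact p.Prime := ⟨hp⟩
  set F : (ZMod p)[X] :=
    X * (X + 1) * ∏ i ∈ Finset.range n, ∑ j ∈ Finset.range (i + 1), (-X) ^ j with hF
  have hsum_ne : ∀ i : ℕ, (∑ j ∈ Finset.range (i + 1), (-X : (ZMod p)[X]) ^ j) ≠ 0 := by
    intro i h
    have := congrArg (Polynomial.eval (0 : ZMod p)) h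
    simp [Polynomial.eval_finset_sum] at this
  have hFne : F ≠ 0 := by
    apply mul_ne_zero (mul_ne_zero X_ne_zero ?_) ?_
    · intro h
      have := congrArg (Polynomial.eval (0 : ZMod p)) h
      simp at this
    · exact Finset.prod_ne_zero_iff.2 fun i _ => hsum_ne i
  have hdegsum : ∀ i : ℕ,
      (∑ j ∈ Finset.range (i + 1), (-X : (ZMod p)[X]) ^ j).natDegree ≤ i := by
    intro i
    apply Polynomial.natDegree_sum_le_of_forall_le
    intro j hj
    calc ((-X : (ZMod p)[X]) ^ j).natDegree ≤ j := by
          simpa using Polynomial.natDegree_pow_le (p := (-X : (ZMod p)[X])) (n := j)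
      _ ≤ i := by simp only [Finset.mem_range] at hj; omega
  have hdeg : F.natDegree < p := by
    have h1 : F.natDegree ≤ (X * (X + 1) : (ZMod p)[X]).natDegree +
        (∏ i ∈ Finset.range n, ∑ j ∈ Finset.range (i + 1), (-X : (ZMod p)[X]) ^ j).natDegree :=
      Polynomial.natDegree_mul_le
    have h2 : (X * (X + 1) : (ZMod p)[X]).natDegree ≤ 2 := by
      refine Polynomial.natDegree_mul_le.trans ?_
      have hx1 : (X + 1 : (ZMod p)[X]).natDegree ≤ 1 :=
        (Polynomial.natDegree_add_le _ _).trans (by simp)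
      simp only [Polynomial.natDegree_X]
      omega
    have h3 : (∏ i ∈ Finset.range n, ∑ j ∈ Finset.range (i + 1),
        (-X : (ZMod p)[X]) ^ j).natDegree ≤ n * (n - 1) := by
      refine Polynomial.natDegree_prod_le _ _ |>.trans ?_
      calc ∑ i ∈ Finset.range n, (∑ j ∈ Finset.range (i + 1),
            (-X : (ZMod p)[X]) ^ j).natDegree
          ≤ ∑ i ∈ Finset.range n, (n - 1) := by
            apply Finset.sum_le_sum
            intro i hi
            exact (hdegsum i).trans (by simp at hi; omega)
        _ = n * (n - 1) := by simp [Finset.sum_const, mul_comm]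
    omega
  obtain ⟨a, ha⟩ := Polynomial.exists_eval_ne_zero_of_natDegree_lt_card F hFne (by
    rw [Cardinal.mk_fintype, ZMod.card]
    exact_mod_cast hdeg)
  have heval : F.eval a = a * (a + 1) * ∏ i ∈ Finset.range n,
      ∑ j ∈ Finset.range (i + 1), (-a) ^ j := by
    simp [hF, Polynomial.eval_prod, Polynomial.eval_finset_sum]
  rw [heval] at ha
  refine ⟨a, ?_, ?_, ?_⟩
  · intro h; apply ha; rw [h]; ring
  · intro h; apply ha; rw [h]; ring
  · intro i hi1 hin hzero
    apply ha
    have : ∏ k ∈ Finset.range n, (∑ j ∈ Finset.range (k + 1), (-a) ^ j) = 0 := by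
      apply Finset.prod_eq_zero (i := i - 1) (by simp; omega)
      have : i - 1 + 1 = i := by omega
      rw [this, hzero]
    rw [this, mul_zero]
end

section
/- Let R be a commutative ring, let M be an R-module, and let t be a unit of R. For b ∈ M define S_b : M → M by S_b(x) = t • x + (1 − t) • b, and let S_b⁻¹(x) = t⁻¹ • x + (1 − t⁻¹) • b be its inverse. Then for every natural number z and all a, b₁, b₂ ∈ M: (i) applying S_{b₁} z times to a and then S_{b₂}⁻¹ z times yields a + (t⁻¹)^z (1 − t^z) • (b₁ − b₂); (ii) applying S_{b₁}⁻¹ z times to a and then S_{b₂} z times yields a + (1 − t^z) • (b₂ − b₁). -/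
lemma alexander_iterate {R M : Type*} [CommRing R] [AddCommGroup M] [Module R M]
    (u : R) (z : ℕ) (a b : M) :
    (fun x => u • x + (1 - u) • b)^[z] a = u ^ z • a + (1 - u ^ z) • b := by
  induction z with
  | zero => simp
  | succ n ih =>
    rw [Function.iterate_succ_apply', ih]
    simp only [smul_add, smul_smul, pow_succ]
    match_scalars <;> ring

/-- Let `R` be a commutative ring, `M` an `R`-module and `t` a unit of `R`.
With `S_b x = t • x + (1 - t) • b` and its inverse `S_b⁻¹ x = t⁻¹ • x + (1 - t⁻¹) • b`:
(i) applying `S_{b₁}` `z` times and then `S_{b₂}⁻¹` `z` times to `a` yields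
`a + (t⁻¹)^z (1 - t^z) • (b₁ - b₂)`;
(ii) applying `S_{b₁}⁻¹` `z` times and then `S_{b₂}` `z` times to `a` yields
`a + (1 - t^z) • (b₂ - b₁)`. -/
theorem alexander_crossing_formulas {R M : Type*} [CommRing R] [AddCommGroup M] [Module R M]
    (t : Rˣ) (z : ℕ) (a b₁ b₂ : M) :
    ((fun x => ((t⁻¹ : Rˣ) : R) • x + (1 - ((t⁻¹ : Rˣ) : R)) • b₂)^[z]
        ((fun x => (t : R) • x + (1 - (t : R)) • b₁)^[z] a) =
      a + ((((t⁻¹ : Rˣ) : R) ^ z * (1 - (t : R) ^ z)) • (b₁ - b₂))) ∧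
    ((fun x => (t : R) • x + (1 - (t : R)) • b₂)^[z]
        ((fun x => ((t⁻¹ : Rˣ) : R) • x + (1 - ((t⁻¹ : Rˣ) : R)) • b₁)^[z] a) =
      a + ((1 - (t : R) ^ z) • (b₂ - b₁))) := by
  have h : ((t⁻¹ : Rˣ) : R) * (t : R) = 1 := by
    rw [← Units.val_mul, inv_mul_cancel, Units.val_one]
  have hz : ((t⁻¹ : Rˣ) : R) ^ z * (t : R) ^ z = 1 := by
    rw [← mul_pow, h, one_pow]
  constructor <;>
  · rw [alexander_iterate, alexander_iterate]
    match_scalars <;>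
      first
        | ring1
        | linear_combination hz
        | linear_combination -hz
end

section
/- Let p be a prime, let s be a finite index set, let f assign to each i ∈ s a polynomial f i ∈ (ZMod p)[X], and let z ≥ 1 be a natural number. Then the polynomial (gcd over i ∈ s of the f i) composed with X^z is a greatest common divisor of the family (f i composed with X^z) for i ∈ s; that is, Finset.gcd s (fun i => (f i).comp (X^z)) is associated to (Finset.gcd s f).comp (X^z) in (ZMod p)[X]. -/
open Polynomial

section RingHomGCD

variable {R S F : Type*} [CommRing R] [IsDomain R] [IsBezout R] [CommRing S] [IsDomain S]
  [FunLike F R S] [RingHomClass F R S] (φ : F)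

/-- One divisibility holds for any ring hom; the other comes from pushing a Bézout identity
`gcd a b = a * x + b * y` through `φ`. -/
theorem associated_gcd_map [GCDMonoid R] [GCDMonoid S] (a b : R) :
    Associated (gcd (φ a) (φ b)) (φ (gcd a b)) := by
  obtain ⟨x, y, hxy⟩ := exists_gcd_eq_mul_add_mul a b
  refine associated_of_dvd_dvd ?_ (dvd_gcd (map_dvd φ (gcd_dvd_left a b))
    (map_dvd φ (gcd_dvd_right a b)))
  rw [hxy, map_add, map_mul, map_mul]
  exact dvd_add ((gcd_dvd_left _ _).mul_right _) ((gcd_dvd_right _ _).mul_right _)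

theorem associated_finset_gcd_map [NormalizedGCDMonoid R] [NormalizedGCDMonoid S] {ι : Type*}
    (s : Finset ι) (f : ι → R) : Associated (s.gcd fun i => φ (f i)) (φ (s.gcd f)) := by
  classical
  induction s using Finset.induction_on with
  | empty => simp
  | insert a s _ ih =>
    rw [Finset.gcd_insert, Finset.gcd_insert]
    exact ((Associated.refl _).gcd ih).trans (associated_gcd_map φ _ _)

end RingHomGCD

theorem gcd_comp_pow_general (p : ℕ) [Fact p.Prime] {ι : Type*} (s : Finset ι)
    (f : ι → Polynomial (ZMod p)) (z : ℕ) :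
    Associated (s.gcd fun i => (f i).comp (X ^ z)) ((s.gcd f).comp (X ^ z)) :=
  associated_finset_gcd_map (compRingHom (X ^ z)) s f

/-- Over the field `ZMod p` (`p` prime), for a finite family of polynomials
`f i` and `z ≥ 1`, the gcd of the family `(f i).comp (X^z)` is associated to
`(gcd of the f i).comp (X^z)`. -/
theorem gcd_comp_pow (p : ℕ) [Fact p.Prime] {ι : Type*} (s : Finset ι)
    (f : ι → Polynomial (ZMod p)) (z : ℕ) (hz : 1 ≤ z) :
    Associated (s.gcd fun i => (f i).comp (X ^ z)) ((s.gcd f).comp (X ^ z)) :=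
  gcd_comp_pow_general p s f z
end

section
/- Let p be a prime, let s be a finite index set, let e assign to each i ∈ s a polynomial e i ∈ (ZMod p)[X], let z ≥ 1 be a natural number, and let h ∈ (ZMod p)[X] be irreducible with natDegree h ≥ 1. If h divides (e i).comp (X^z) for every i ∈ s, then there exists an irreducible polynomial h' ∈ (ZMod p)[X] with natDegree h' ≥ 1 such that h' divides e i for every i ∈ s. -/
open Polynomial

/-- Over the field `ZMod p` (`p` prime): if an irreducible `h` of positive
degree divides `(e i).comp (X^z)` for every `i` in a finite set `s` (with `z ≥ 1`), then some
irreducible `h'` of positive degree divides `e i` for every `i ∈ s`. -/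
theorem exists_irreducible_common_divisor_of_comp (p : ℕ) [Fact p.Prime] {ι : Type*}
    (s : Finset ι) (e : ι → Polynomial (ZMod p)) (z : ℕ) (hz : 1 ≤ z)
    (h : Polynomial (ZMod p)) (hirr : Irreducible h) (hdeg : 1 ≤ h.natDegree)
    (hdvd : ∀ i ∈ s, h ∣ (e i).comp (X ^ z)) :
    ∃ h' : Polynomial (ZMod p), Irreducible h' ∧ 1 ≤ h'.natDegree ∧ ∀ i ∈ s, h' ∣ e i := by
  set K := AlgebraicClosure (ZMod p)
  have hdeg' : h.degree ≠ 0 := by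
    intro hc
    have : h.natDegree = 0 := natDegree_eq_zero_iff_degree_le_zero.mpr hc.le
    omega
  obtain ⟨α, hα⟩ := IsAlgClosed.exists_aeval_eq_zero K h hdeg'
  have hint : IsIntegral (ZMod p) (α ^ z) := Algebra.IsIntegral.isIntegral _
  refine ⟨minpoly (ZMod p) (α ^ z), minpoly.irreducible hint, minpoly.natDegree_pos hint, ?_⟩
  intro i hi
  apply minpoly.dvd
  have hdvd' := hdvd i hi
  obtain ⟨g, hg⟩ := hdvd'
  have : (aeval α) ((e i).comp (X ^ z)) = 0 := by
    rw [hg, map_mul, hα, zero_mul]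
  rwa [aeval_comp, map_pow, aeval_X] at this
end

section
/- Let f be a polynomial with integer coefficients, let n₀ be a natural number, and let S be a finite set of prime numbers. Suppose that for every natural number n ≥ n₀ the value f(n) is nonzero and every prime dividing f(n) belongs to S (equivalently, f(n) = ± a product of powers of the primes in S). Then f is a constant polynomial. -/
/-! Put `c = f(n₀)` and let `P` be the product of the primes in `S`. Along the progression
`n = n₀ + c²P·t` we have `f(n) ≡ c (mod c²P)`, so `f(n) = c·u` with `u ≡ 1 (mod P)`. Every prime
factor of `u` divides `f(n)`, hence lies in `S` and divides `P`, which is impossible as `u` is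
coprime to `P`; so `u = ±1` and `f(n)² = c²` for infinitely many `n`. Thus `f² = c²` as
polynomials and `f` is constant. -/

open Polynomial

theorem Int.isUnit_of_isCoprime_of_forall_prime_dvd {u m : ℤ} (hcop : IsCoprime u m)
    (hdvd : ∀ p : ℕ, p.Prime → (p : ℤ) ∣ u → (p : ℤ) ∣ m) : IsUnit u := by
  by_contra hu
  obtain ⟨p, hp, hpu⟩ := Int.exists_prime_and_dvd (mt Int.isUnit_iff_natAbs_eq.2 hu)
  have hp' : p.natAbs.Prime := Int.prime_iff_natAbs_prime.1 hp
  exact hp.not_isUnit <| hcop.isUnit_of_dvd' hpu <| Int.natAbs_dvd.1 <| hdvd _ hp' <| Int.natAbs_dvd.2 hpu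

namespace Polynomial

variable {R : Type*} [CommRing R]

theorem exists_eval_add_eval_mul_eq (f : R[X]) (a k : R) :
    ∃ w, f.eval (a + f.eval a * k) = f.eval a * (1 + k * w) := by
  obtain ⟨w, hw⟩ := sub_dvd_eval_sub (a + f.eval a * k) a f
  exact ⟨w, by linear_combination hw⟩

theorem natDegree_eq_zero_of_infinite_eval_sq_eq [IsDomain R] (f : R[X]) (c : R)
    (h : {x | f.eval x ^ 2 = c}.Infinite) : f.natDegree = 0 := by
  have hsq : f ^ 2 = C c := eq_of_infinite_eval_eq _ _ (by simpa using h)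
  have := congrArg natDegree hsq
  rw [natDegree_pow, natDegree_C] at this
  omega

end Polynomial

/-- If `f ∈ ℤ[X]` is such that for every natural number `n ≥ n₀` the value
`f(n)` is nonzero and all its prime divisors lie in a fixed finite set `S` of primes, then
`f` is constant (has natural degree `0`). -/
theorem natDegree_eq_zero_of_prime_divisors_finite (f : Polynomial ℤ) (n₀ : ℕ) (S : Finset ℕ)
    (hS : ∀ q ∈ S, Nat.Prime q)
    (hval : ∀ n : ℕ, n₀ ≤ n → f.eval (n : ℤ) ≠ 0 ∧
      ∀ q : ℕ, q.Prime → (q : ℤ) ∣ f.eval (n : ℤ) → q ∈ S) :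
    f.natDegree = 0 := by
  set c := f.eval (n₀ : ℤ)
  set P := ∏ q ∈ S, q
  have hstep : 0 < c.natAbs ^ 2 * P :=
    Nat.pos_of_ne_zero <| mul_ne_zero (pow_ne_zero 2 (Int.natAbs_ne_zero.2 (hval n₀ le_rfl).1))
      (Finset.prod_ne_zero_iff.2 fun q hq => (hS q hq).ne_zero)
  set N : ℕ → ℕ := fun t => n₀ + c.natAbs ^ 2 * P * t
  have hN : ∀ t, (N t : ℤ) = n₀ + c * (c * P * t) := fun t => by
    simp only [N]; push_cast [Int.natCast_natAbs, sq_abs]; ring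
  have hN_inj : (fun t => (N t : ℤ)).Injective := fun a b hab =>
    Nat.eq_of_mul_eq_mul_left hstep (Nat.add_left_cancel (Nat.cast_injective hab))
  have hsq : ∀ t, f.eval (N t : ℤ) ^ 2 = c ^ 2 := fun t => by
    obtain ⟨w, hw⟩ := f.exists_eval_add_eval_mul_eq n₀ (c * P * t)
    rw [← hN] at hw
    have hcop : IsCoprime (1 + c * P * t * w) P := ⟨1, -(c * t * w), by ring⟩
    have hunit := Int.isUnit_of_isCoprime_of_forall_prime_dvd hcop fun p hp hpu =>
      Int.natCast_dvd_natCast.2 <| Finset.dvd_prod_of_mem _ <|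
        (hval (N t) le_self_add).2 p hp (hw ▸ dvd_mul_of_dvd_right hpu c)
    rw [hw, mul_pow, Int.isUnit_sq hunit, mul_one]
  refine f.natDegree_eq_zero_of_infinite_eval_sq_eq (c ^ 2) ?_
  exact (Set.infinite_range_of_injective hN_inj).mono (Set.range_subset_iff.2 hsq)
end

section
/- Let p be an odd prime, let h ∈ (ZMod p)[X] be irreducible with natDegree ≥ 1 and nonzero constant coefficient, let K = (ZMod p)[X] ⧸ span{h} with t̄ the residue class of X, and let z be a natural number. Let m₁₁, m₁₂, m₂₁, m₂₂ be integers with m₁₂ − m₂₁ = 1, and regard them as elements of K via the canonical map. Then the four equations in K: (t̄^z − 1)·m₁₁ = 0, t̄^z·(m₁₂ − 1) − m₁₂ = 0, t̄^z·(m₂₁ + 1) − m₂₁ = 0, (t̄^z − 1)·m₂₂ = 0 hold simultaneously if and only if m₁₁ ≡ 0 (mod p), m₂₂ ≡ 0 (mod p), 2·m₁₂ ≡ 1 (mod p), 2·m₂₁ ≡ −1 (mod p), and h divides 1 + X^z in (ZMod p)[X]. -/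
open Polynomial

/-!
As `m₁₂ - 1 = m₂₁` and `m₂₁ + 1 = m₁₂`, the off-diagonal equations say `T m₂₁ = m₁₂` and
`T m₁₂ = m₂₁` for `T = t̄^z`; subtracting them gives `T = -1`, after which both reduce to
`m₁₂ + m₂₁ = 0`, i.e. `2 m₁₂ = 1` and `2 m₂₁ = -1`. The diagonal equations become `-2 m = 0`,
and `2` is invertible because `p` is odd. Since `K` is a nonzero `ZMod p`-algebra, `ZMod p` embeds
in it, so the congruences mod `p` can be read in `K`.
-/

theorem mul_sub_one_sub_eq_zero_and_mul_add_one_sub_eq_zero_iff {R : Type*} [CommRing R]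
    {T a b : R} (hab : a - b = 1) :
    T * (a - 1) - a = 0 ∧ T * (b + 1) - b = 0 ↔ T = -1 ∧ 2 * a = 1 ∧ 2 * b = -1 := by
  obtain rfl : a = b + 1 := by linear_combination hab
  constructor
  · rintro ⟨h₁, h₂⟩
    obtain rfl : T = -1 := by linear_combination h₂ - h₁
    exact ⟨rfl, by linear_combination -h₁, by linear_combination -h₁⟩
  · rintro ⟨rfl, -, hb⟩
    exact ⟨by linear_combination -hb, by linear_combination -hb⟩

theorem coloring_equations_iff {R : Type*} [CommRing R] (h2 : IsUnit (2 : R))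
    {T a b c d : R} (hab : a - b = 1) :
    ((T - 1) * c = 0 ∧ T * (a - 1) - a = 0 ∧ T * (b + 1) - b = 0 ∧ (T - 1) * d = 0) ↔
      (c = 0 ∧ d = 0 ∧ 2 * a = 1 ∧ 2 * b = -1 ∧ T = -1) := by
  have cancel (x : R) : (-1 - 1) * x = 0 ↔ x = 0 := by
    rw [show (-1 - 1) * x = -(2 * x) by ring, neg_eq_zero, h2.mul_right_eq_zero]
  have off_diagonal := mul_sub_one_sub_eq_zero_and_mul_add_one_sub_eq_zero_iff (T := T) hab
  constructor
  · rintro ⟨hc, h₁, h₂, hd⟩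
    obtain ⟨rfl, ha, hb⟩ := off_diagonal.1 ⟨h₁, h₂⟩
    exact ⟨(cancel c).1 hc, (cancel d).1 hd, ha, hb, rfl⟩
  · rintro ⟨rfl, rfl, ha, hb, rfl⟩
    obtain ⟨h₁, h₂⟩ := off_diagonal.2 ⟨rfl, ha, hb⟩
    exact ⟨mul_zero _, h₁, h₂, mul_zero _⟩

theorem Ideal.Quotient.mk_span_singleton_eq_neg_one_iff {A : Type*} [CommRing A] (h x : A) :
    Ideal.Quotient.mk (Ideal.span {h}) x = -1 ↔ h ∣ 1 + x := by
  rw [← Ideal.Quotient.eq_zero_iff_dvd, map_add, map_one, eq_neg_iff_add_eq_zero, add_comm]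

theorem genus_one_maximal_coloring_iff_general (p : ℕ) (hp : p.Prime) (hodd : Odd p)
    (h : Polynomial (ZMod p)) (hirr : Irreducible h)
    (z : ℕ) (m₁₁ m₁₂ m₂₁ m₂₂ : ℤ) (hm : m₁₂ - m₂₁ = 1) :
    (((Ideal.Quotient.mk (Ideal.span {h}) X) ^ z - 1) *
        (m₁₁ : Polynomial (ZMod p) ⧸ Ideal.span {h}) = 0 ∧
     (Ideal.Quotient.mk (Ideal.span {h}) X) ^ z *
        ((m₁₂ : Polynomial (ZMod p) ⧸ Ideal.span {h}) - 1) -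
        (m₁₂ : Polynomial (ZMod p) ⧸ Ideal.span {h}) = 0 ∧
     (Ideal.Quotient.mk (Ideal.span {h}) X) ^ z *
        ((m₂₁ : Polynomial (ZMod p) ⧸ Ideal.span {h}) + 1) -
        (m₂₁ : Polynomial (ZMod p) ⧸ Ideal.span {h}) = 0 ∧
     ((Ideal.Quotient.mk (Ideal.span {h}) X) ^ z - 1) *
        (m₂₂ : Polynomial (ZMod p) ⧸ Ideal.span {h}) = 0) ↔
    ((m₁₁ : ZMod p) = 0 ∧ (m₂₂ : ZMod p) = 0 ∧
     ((2 * m₁₂ : ℤ) : ZMod p) = 1 ∧ ((2 * m₂₁ : ℤ) : ZMod p) = -1 ∧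
     h ∣ (1 + X ^ z)) := by
  have : Fact p.Prime := ⟨hp⟩
  set ι := algebraMap (ZMod p) (Polynomial (ZMod p) ⧸ Ideal.span {h})
  have : Nontrivial (Polynomial (ZMod p) ⧸ Ideal.span {h}) :=
    Ideal.Quotient.nontrivial_iff.2 <| by
      rw [Ne, Ideal.span_singleton_eq_top]
      exact hirr.not_isUnit
  have hcast (m : ℤ) (x : ZMod p) : (m : ZMod p) = x ↔ ι m = ι x := ι.injective.eq_iff.symm
  have h2 : IsUnit (2 : ZMod p) := by
    exact_mod_cast (ZMod.isUnit_iff_coprime 2 p).2 (Nat.coprime_two_left.2 hodd)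
  rw [hcast, hcast, hcast, hcast, ← Ideal.Quotient.mk_span_singleton_eq_neg_one_iff, map_pow]
  simp only [Int.cast_mul, Int.cast_ofNat, map_mul, map_ofNat, map_intCast, map_zero, map_one,
    map_neg]
  refine coloring_equations_iff (by simpa only [map_ofNat] using h2.map ι) ?_
  exact_mod_cast congrArg (Int.cast : ℤ → Polynomial (ZMod p) ⧸ Ideal.span {h}) hm

/-- Let `p` be an odd prime, `h` irreducible in `(ZMod p)[X]` with
`natDegree ≥ 1` and nonzero constant coefficient, `K = (ZMod p)[X] ⧸ span {h}` with `t̄` the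
class of `X`, and `z : ℕ`. For integers `m₁₁, m₁₂, m₂₁, m₂₂` with `m₁₂ - m₂₁ = 1`, the four
equations `(t̄^z - 1)·m₁₁ = 0`, `t̄^z·(m₁₂ - 1) - m₁₂ = 0`, `t̄^z·(m₂₁ + 1) - m₂₁ = 0`,
`(t̄^z - 1)·m₂₂ = 0` hold in `K` iff `m₁₁ ≡ 0`, `m₂₂ ≡ 0`, `2m₁₂ ≡ 1`, `2m₂₁ ≡ -1 (mod p)`
and `h ∣ 1 + X^z`. -/
theorem genus_one_maximal_coloring_iff (p : ℕ) (hp : p.Prime) (hodd : Odd p)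
    (h : Polynomial (ZMod p)) (hirr : Irreducible h)
    (hdeg : 1 ≤ h.natDegree) (hc0 : h.coeff 0 ≠ 0)
    (z : ℕ) (m₁₁ m₁₂ m₂₁ m₂₂ : ℤ) (hm : m₁₂ - m₂₁ = 1) :
    (((Ideal.Quotient.mk (Ideal.span {h}) X) ^ z - 1) *
        (m₁₁ : Polynomial (ZMod p) ⧸ Ideal.span {h}) = 0 ∧
     (Ideal.Quotient.mk (Ideal.span {h}) X) ^ z *
        ((m₁₂ : Polynomial (ZMod p) ⧸ Ideal.span {h}) - 1) -
        (m₁₂ : Polynomial (ZMod p) ⧸ Ideal.span {h}) = 0 ∧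
     (Ideal.Quotient.mk (Ideal.span {h}) X) ^ z *
        ((m₂₁ : Polynomial (ZMod p) ⧸ Ideal.span {h}) + 1) -
        (m₂₁ : Polynomial (ZMod p) ⧸ Ideal.span {h}) = 0 ∧
     ((Ideal.Quotient.mk (Ideal.span {h}) X) ^ z - 1) *
        (m₂₂ : Polynomial (ZMod p) ⧸ Ideal.span {h}) = 0) ↔
    ((m₁₁ : ZMod p) = 0 ∧ (m₂₂ : ZMod p) = 0 ∧
     ((2 * m₁₂ : ℤ) : ZMod p) = 1 ∧ ((2 * m₂₁ : ℤ) : ZMod p) = -1 ∧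
     h ∣ (1 + X ^ z)) :=
  genus_one_maximal_coloring_iff_general p hp hodd h hirr z m₁₁ m₁₂ m₂₁ m₂₂ hm
end

section
/- Let p be an odd prime, let h ∈ (ZMod p)[X] be irreducible with natDegree ≥ 1 and nonzero constant coefficient, let K = (ZMod p)[X] ⧸ span{h} with t̄ the residue class of X, and let z ≥ 1 be a natural number. Let a, b, c, d be integers with b − c = 1, set W = a·d − b·c ∈ ℤ, and let w = (W mod p) ∈ ZMod p. Then the determinant (computed in K, with integer entries mapped into K) of the 2×2 matrix with rows ((t̄^z − 1)·a, t̄^z·(b−1) − b) and (t̄^z·(c+1) − c, (t̄^z − 1)·d) equals 0 if and only if h divides the polynomial C w + C ((1 − 2·W) mod p)·X^z + C w·X^(2z) in (ZMod p)[X]. -/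
open Polynomial

/-- Let `p` be an odd prime, `h` irreducible in `(ZMod p)[X]` with
`natDegree ≥ 1` and nonzero constant coefficient, `K = (ZMod p)[X] ⧸ span {h}` with `t̄` the
class of `X`, and `z ≥ 1`. For integers `a, b, c, d` with `b - c = 1` and `W = a*d - b*c`,
the determinant in `K` of `!![(t̄^z - 1)*a, t̄^z*(b-1) - b; t̄^z*(c+1) - c, (t̄^z - 1)*d]`
vanishes iff `h` divides `C (W mod p) + C ((1 - 2W) mod p)*X^z + C (W mod p)*X^(2z)`. -/
theorem genus_one_nontrivial_coloring_iff (p : ℕ) (hp : p.Prime) (hodd : Odd p)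
    (h : Polynomial (ZMod p)) (hirr : Irreducible h)
    (hdeg : 1 ≤ h.natDegree) (hc0 : h.coeff 0 ≠ 0)
    (z : ℕ) (hz : 1 ≤ z) (a b c d : ℤ) (hbc : b - c = 1) :
    Matrix.det
      !![((Ideal.Quotient.mk (Ideal.span {h}) X) ^ z - 1) *
            (a : Polynomial (ZMod p) ⧸ Ideal.span {h}),
         (Ideal.Quotient.mk (Ideal.span {h}) X) ^ z *
            ((b : Polynomial (ZMod p) ⧸ Ideal.span {h}) - 1) -
            (b : Polynomial (ZMod p) ⧸ Ideal.span {h});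
         (Ideal.Quotient.mk (Ideal.span {h}) X) ^ z *
            ((c : Polynomial (ZMod p) ⧸ Ideal.span {h}) + 1) -
            (c : Polynomial (ZMod p) ⧸ Ideal.span {h}),
         ((Ideal.Quotient.mk (Ideal.span {h}) X) ^ z - 1) *
            (d : Polynomial (ZMod p) ⧸ Ideal.span {h})] = 0 ↔
    h ∣ (C ((a * d - b * c : ℤ) : ZMod p) +
          C ((1 - 2 * (a * d - b * c) : ℤ) : ZMod p) * X ^ z +
          C ((a * d - b * c : ℤ) : ZMod p) * X ^ (2 * z)) := by
  have hb : b = c + 1 := by omega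
  subst hb
  rw [show Matrix.det
      !![((Ideal.Quotient.mk (Ideal.span {h}) X) ^ z - 1) *
            (a : Polynomial (ZMod p) ⧸ Ideal.span {h}),
         (Ideal.Quotient.mk (Ideal.span {h}) X) ^ z *
            (((c + 1 : ℤ) : Polynomial (ZMod p) ⧸ Ideal.span {h}) - 1) -
            ((c + 1 : ℤ) : Polynomial (ZMod p) ⧸ Ideal.span {h});
         (Ideal.Quotient.mk (Ideal.span {h}) X) ^ z *
            ((c : Polynomial (ZMod p) ⧸ Ideal.span {h}) + 1) -
            (c : Polynomial (ZMod p) ⧸ Ideal.span {h}),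
         ((Ideal.Quotient.mk (Ideal.span {h}) X) ^ z - 1) *
            (d : Polynomial (ZMod p) ⧸ Ideal.span {h})] =
      Ideal.Quotient.mk (Ideal.span {h})
        (C ((a * d - (c + 1) * c : ℤ) : ZMod p) +
          C ((1 - 2 * (a * d - (c + 1) * c) : ℤ) : ZMod p) * X ^ z +
          C ((a * d - (c + 1) * c : ℤ) : ZMod p) * X ^ (2 * z)) by
    simp only [Matrix.det_fin_two_of, C_eq_intCast, map_add, map_mul, map_pow,
      map_intCast, pow_mul]
    push_cast
    ring, Ideal.Quotient.eq_zero_iff_mem, Ideal.mem_span_singleton]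
end
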